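/- arXiv:1206.0895 — 2 statements merged into one kernel-verified Lean document; each statement's English description precedes it below -/
import Mathlib

section
/- Let m ∈ ℝ and α ∈ (0,1). Then for every realization h = (h_i)_{i∈ℕ} ∈ ℝ^ℕ and every n ≥ 1, the random variable (S_n − n m)/n^α + W/n^{α−1/2} is, under the product measure P_{n,β}^h ⊗ N(0, β^{−1}), absolutely continuous with respect to Lebesgue measure on ℝ, with density s ↦ exp(−n G_n^h(m + n^{α−1} s)) / ∫_ℝ exp(−n G_n^h(m + n^{α−1} t)) dt. -/
open MeasureTheory ProbabilityTheory Real Filter Topology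
open scoped ENNReal NNReal

noncomputable section

/-- The value of a spin encoded as a Boolean. -/
def spin (b : Bool) : ℝ := if b then 1 else -1

/-- Total magnetization of a configuration. -/
def mag {n : ℕ} (σ : Fin n → Bool) : ℝ := ∑ i, spin (σ i)

/-- Gibbs weight of a configuration in the random field Curie-Weiss model. -/
def gibbsWeight (β : ℝ) (h : ℕ → ℝ) (n : ℕ) (σ : Fin n → Bool) : ℝ :=
  Real.exp (β / (2 * n) * (mag σ) ^ 2 + β * ∑ i : Fin n, h i * spin (σ i))

/-- The random field Curie-Weiss Gibbs measure on configurations. -/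
def gibbsMeasure (β : ℝ) (h : ℕ → ℝ) (n : ℕ) : Measure (Fin n → Bool) :=
  (ENNReal.ofReal (∑ σ : Fin n → Bool, gibbsWeight β h n σ))⁻¹ •
    ∑ σ : Fin n → Bool, ENNReal.ofReal (gibbsWeight β h n σ) • Measure.dirac σ

/-- `μ` is the infinite product of `ν` over `ℕ` (characterised by finite marginals). -/
def IsProductMeasure (ν : Measure ℝ) (μ : Measure (ℕ → ℝ)) : Prop :=
  ∀ n : ℕ, μ.map (fun h (i : Fin n) => h (i : ℕ)) = Measure.pi fun _ : Fin n => ν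

/-- extended logarithm, `elog 0 = ⊥`, `elog ⊤ = ⊤`. -/
def elog (x : ℝ≥0∞) : EReal :=
  if x = 0 then ⊥ else if x = ⊤ then ⊤ else ((Real.log x.toReal : ℝ) : EReal)

/-- A sequence of measures satisfies a large deviations principle with given speed and
rate function. -/
def HasLDP (P : ℕ → Measure ℝ) (speed : ℕ → ℝ) (I : ℝ → ℝ≥0∞) : Prop :=
  LowerSemicontinuous I ∧ (∀ c : ℝ, IsCompact {x : ℝ | I x ≤ ENNReal.ofReal c}) ∧
    ∀ C : Set ℝ, MeasurableSet C →
      -(⨅ x ∈ interior C, (I x : EReal)) ≤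
          liminf (fun n => ((((speed n)⁻¹ : ℝ) : EReal)) * elog (P n C)) atTop ∧
        limsup (fun n => ((((speed n)⁻¹ : ℝ) : EReal)) * elog (P n C)) atTop ≤
          -(⨅ x ∈ closure C, (I x : EReal))

/-- The function `G` of the random field Curie-Weiss model. -/
def G (β : ℝ) (ν : Measure ℝ) (x : ℝ) : ℝ :=
  β / 2 * x ^ 2 - ∫ h, Real.log (Real.cosh (β * (x + h))) ∂ν

/-- The finite-volume function `G_n^h`. -/
def Gn (β : ℝ) (h : ℕ → ℝ) (n : ℕ) (x : ℝ) : ℝ :=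
  β / 2 * x ^ 2 - (1 / n) * ∑ i : Fin n, Real.log (Real.cosh (β * (x + h i)))

/-- `m` is a (local or global) minimum of `G` of type `k` and strength `l`. -/
def IsMinOfType (β : ℝ) (ν : Measure ℝ) (m : ℝ) (k : ℕ) (l : ℝ) : Prop :=
  1 ≤ k ∧ 0 < l ∧ (∀ i : ℕ, 1 ≤ i → i ≤ 2 * k - 1 → iteratedDeriv i (G β ν) m = 0) ∧
    iteratedDeriv (2 * k) (G β ν) m = l

/-- The height of a minimum `m` of `G`. -/
def height (β : ℝ) (ν : Measure ℝ) (m : ℝ) : ℝ := G β ν m - ⨅ w, G β ν w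

/-- The broadness of a minimum `m` of `G`. -/
def broadness (β : ℝ) (ν : Measure ℝ) (m : ℝ) : ℝ :=
  sInf ((fun y => |y - m|) '' {y | G β ν y < G β ν m})

/-- The moderate deviations rate function. -/
def mdpRate (β l : ℝ) (k : ℕ) (x : ℝ) : ℝ≥0∞ :=
  if k = 1 then ENNReal.ofReal (x ^ 2 / (2 * (l⁻¹ - β⁻¹)))
  else ENNReal.ofReal (l * x ^ (2 * k) / (Nat.factorial (2 * k)))

/-- The polynomial `P_{2k}`. -/
def P2k (l : ℝ) (k : ℕ) (s : ℝ) : ℝ :=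
  l / (2 * (Nat.factorial (2 * k))) * s ^ (2 * k) - ∑ i ∈ Finset.Icc 1 (2 * k - 1), |s| ^ i

/-!
Given the spins, `(S_n - n m)/n^α + W/n^(α-1/2)` is Gaussian with mean `(S_n - n m)/n^α` and
variance `n^(1-2α)/β`, so its law is a finite mixture of Gaussian densities. With
`x = m + n^(α-1) s`, completing the square turns the Gibbs weight times the Gaussian density at `s`
into `exp(-n β x²/2 + Σ_i β (x + h_i) σ_i)`, and summing over the spins gives
`2^n exp(-n β x²/2) ∏_i cosh(β (x + h_i)) = 2^n exp(-n G_n^h(x))`. The normalising constant is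
then forced by the law being a probability measure.
-/

lemma gaussianReal_map_const_add_div (a c : ℝ) (v : ℝ≥0) :
    (gaussianReal 0 v).map (fun w => a + w / c)
      = gaussianReal a (v / .mk (c ^ 2) (sq_nonneg c)) := by
  have hcomp : (fun w : ℝ => a + w / c) = (a + ·) ∘ (· / c) := rfl
  rw [hcomp, ← Measure.map_map (measurable_const_add a) (measurable_div_const c),
    gaussianReal_map_div_const, gaussianReal_map_const_add, zero_div, zero_add]

lemma measurable_add_div {X : Type*} [MeasurableSpace X] [Countable X]
    [MeasurableSingletonClass X] (a : X → ℝ) (c : ℝ) :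
    Measurable fun p : X × ℝ => a p.1 + p.2 / c :=
  ((measurable_of_countable a).comp measurable_fst).add (measurable_snd.div_const c)

lemma map_prod_gaussianReal_add_div {X : Type*} [MeasurableSpace X] [Fintype X]
    [MeasurableSingletonClass X] (μ : Measure X) [SFinite μ] (a : X → ℝ) (c : ℝ) {v : ℝ≥0}
    (hv : v / .mk (c ^ 2) (sq_nonneg c) ≠ 0) :
    (μ.prod (gaussianReal 0 v)).map (fun p => a p.1 + p.2 / c)
      = volume.withDensity fun s =>
          ∑ x, μ {x} * gaussianPDF (a x) (v / .mk (c ^ 2) (sq_nonneg c)) s := by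
  have hF := measurable_add_div a c
  ext A hA
  rw [Measure.map_apply hF hA, Measure.prod_apply (hF hA), lintegral_fintype,
    withDensity_apply _ hA,
    lintegral_finsetSum _ fun x _ => (measurable_gaussianPDF _ _).const_mul _]
  refine Finset.sum_congr rfl fun x _ => ?_
  rw [mul_comm, lintegral_const_mul _ (measurable_gaussianPDF _ _), ← withDensity_apply _ hA,
    ← gaussianReal_of_var_ne_zero _ hv, ← gaussianReal_map_const_add_div,
    Measure.map_apply (by fun_prop) hA]
  rfl

lemma eq_withDensity_ofReal_div_integral {X : Type*} [MeasurableSpace X] {μ ν : Measure X}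
    [IsProbabilityMeasure μ] {f : X → ℝ} {c : ℝ} (hf : Measurable f) (hf0 : 0 ≤ f) (hc : 0 ≤ c)
    (hμ : μ = ν.withDensity fun x => ENNReal.ofReal (c * f x)) :
    μ = ν.withDensity fun x => ENNReal.ofReal (f x / ∫ y, f y ∂ν) := by
  have hmass : c * ∫ y, f y ∂ν = 1 := by
    rw [← integral_const_mul, integral_eq_lintegral_of_nonneg_ae
      (ae_of_all _ fun x => mul_nonneg hc (hf0 x)) (hf.const_mul c).aestronglyMeasurable,
      ← Measure.restrict_univ (μ := ν), ← withDensity_apply _ .univ, ← hμ, measure_univ,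
      ENNReal.toReal_one]
  simp_rw [hμ, div_eq_mul_inv, eq_inv_of_mul_eq_one_right hmass, inv_inv, mul_comm]

lemma rpow_sub_half_sq {x : ℝ} (hx : 0 < x) (a : ℝ) : (x ^ (a - 1 / 2)) ^ 2 = (x ^ a) ^ 2 / x := by
  rw [rpow_sub hx, div_pow, ← sqrt_eq_rpow, sq_sqrt hx.le]

lemma sum_exp_sum_mul_spin {n : ℕ} (t : Fin n → ℝ) :
    ∑ σ : Fin n → Bool, exp (∑ i, t i * spin (σ i)) = 2 ^ n * ∏ i, cosh (t i) := by
  have hpair (x : ℝ) : ∑ b : Bool, exp (x * spin b) = 2 * cosh x := by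
    simp only [Fintype.sum_bool, spin, if_true, Bool.false_eq_true, if_false, mul_one, mul_neg,
      cosh_eq]
    ring
  simp_rw [exp_sum]
  rw [← Fintype.prod_sum fun i b => exp (t i * spin b)]
  simp_rw [hpair, Finset.prod_mul_distrib, Finset.prod_const, Finset.card_univ, Fintype.card_fin]

lemma exp_neg_mul_Gn (β : ℝ) (h : ℕ → ℝ) {n : ℕ} (hn : (n : ℝ) ≠ 0) (x : ℝ) :
    exp (-n * Gn β h n x) = exp (-(n * (β / 2 * x ^ 2))) * ∏ i : Fin n, cosh (β * (x + h i)) := by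
  have hexp : -n * Gn β h n x
      = -(n * (β / 2 * x ^ 2)) + ∑ i : Fin n, log (cosh (β * (x + h i))) := by
    rw [Gn]
    field_simp
    ring
  rw [hexp, exp_add, exp_sum]
  simp_rw [exp_log (cosh_pos _)]

lemma gibbsWeight_mul_exp_neg_sq {β : ℝ} (hβ : β ≠ 0) (h : ℕ → ℝ) {n : ℕ} (hn : (n : ℝ) ≠ 0)
    {A : ℝ} (hA : A ≠ 0) (m s : ℝ) (σ : Fin n → Bool) :
    gibbsWeight β h n σ * exp (-(s - (mag σ - n * m) / A) ^ 2 / (2 * (β⁻¹ * n / A ^ 2)))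
      = exp (-(n * (β / 2 * (m + A / n * s) ^ 2)))
        * exp (∑ i : Fin n, β * (m + A / n * s + h i) * spin (σ i)) := by
  have hsum : ∑ i : Fin n, β * (m + A / n * s + h i) * spin (σ i)
      = β * (m + A / n * s) * mag σ + β * ∑ i : Fin n, h i * spin (σ i) := by
    rw [mag, Finset.mul_sum, Finset.mul_sum, ← Finset.sum_add_distrib]
    exact Finset.sum_congr rfl fun i _ => by ring
  rw [gibbsWeight, ← exp_add, ← exp_add, hsum]
  congr 1
  field_simp
  ring

lemma sum_gibbsWeight_mul_gaussianPDFReal {β : ℝ} (hβ : β ≠ 0) (h : ℕ → ℝ) {n : ℕ}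
    (hn : (n : ℝ) ≠ 0) {A : ℝ} (hA : A ≠ 0) {v : ℝ≥0} (hv : (v : ℝ) = β⁻¹ * n / A ^ 2)
    (m s : ℝ) :
    ∑ σ, gibbsWeight β h n σ * gaussianPDFReal ((mag σ - n * m) / A) v s
      = (√(2 * π * v))⁻¹ * 2 ^ n * exp (-n * Gn β h n (m + A / n * s)) := by
  simp_rw [gaussianPDFReal, mul_left_comm (gibbsWeight β h n _), hv,
    gibbsWeight_mul_exp_neg_sq hβ h hn hA, ← Finset.mul_sum,
    sum_exp_sum_mul_spin fun i => β * (m + A / n * s + h i), exp_neg_mul_Gn β h hn]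
  ring

lemma gibbsWeight_pos (β : ℝ) (h : ℕ → ℝ) (n : ℕ) (σ : Fin n → Bool) :
    0 < gibbsWeight β h n σ :=
  exp_pos _

lemma sum_gibbsWeight_pos (β : ℝ) (h : ℕ → ℝ) (n : ℕ) : 0 < ∑ σ, gibbsWeight β h n σ :=
  Finset.sum_pos (fun σ _ => gibbsWeight_pos β h n σ) Finset.univ_nonempty

lemma gibbsMeasure_singleton (β : ℝ) (h : ℕ → ℝ) (n : ℕ) (σ : Fin n → Bool) :
    gibbsMeasure β h n {σ}
      = ENNReal.ofReal (gibbsWeight β h n σ / ∑ τ, gibbsWeight β h n τ) := by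
  have hZ := sum_gibbsWeight_pos β h n
  simp [gibbsMeasure, Measure.dirac_apply' _ (measurableSet_singleton σ), Pi.single_apply,
    div_eq_inv_mul, ENNReal.ofReal_mul (inv_nonneg.2 hZ.le), ENNReal.ofReal_inv_of_pos hZ]

instance isProbabilityMeasure_gibbsMeasure (β : ℝ) (h : ℕ → ℝ) (n : ℕ) :
    IsProbabilityMeasure (gibbsMeasure β h n) := by
  constructor
  rw [← Finset.coe_univ, ← sum_measure_singleton]
  simp_rw [gibbsMeasure_singleton]
  rw [← ENNReal.ofReal_sum_of_nonneg fun σ _ => div_nonneg (gibbsWeight_pos β h n σ).le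
      (sum_gibbsWeight_pos β h n).le, ← Finset.sum_div, div_self (sum_gibbsWeight_pos β h n).ne',
    ENNReal.ofReal_one]

lemma sum_gibbsMeasure_singleton_mul_gaussianPDF (β : ℝ) (h : ℕ → ℝ) (n : ℕ)
    (a : (Fin n → Bool) → ℝ) (v : ℝ≥0) (s : ℝ) :
    ∑ σ, gibbsMeasure β h n {σ} * gaussianPDF (a σ) v s
      = ENNReal.ofReal ((∑ σ, gibbsWeight β h n σ * gaussianPDFReal (a σ) v s)
          / ∑ τ, gibbsWeight β h n τ) := by
  have hterm (σ : Fin n → Bool) : 0 ≤ gibbsWeight β h n σ / ∑ τ, gibbsWeight β h n τ :=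
    div_nonneg (gibbsWeight_pos β h n σ).le (sum_gibbsWeight_pos β h n).le
  simp_rw [gibbsMeasure_singleton, gaussianPDF, ← ENNReal.ofReal_mul (hterm _)]
  rw [← ENNReal.ofReal_sum_of_nonneg fun σ _ => mul_nonneg (hterm σ) (gaussianPDFReal_nonneg _ _ _),
    Finset.sum_div]
  simp_rw [div_mul_eq_mul_div]

theorem hubbard_stratonovich_general
    (β : ℝ) (hβ : 0 < β) (m α : ℝ)
    (h : ℕ → ℝ) (n : ℕ) (hn : 1 ≤ n) :
    (((gibbsMeasure β h n).prod (gaussianReal 0 (Real.toNNReal β⁻¹))).map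
        (fun p : (Fin n → Bool) × ℝ =>
          (mag p.1 - n * m) / (n : ℝ) ^ α + p.2 / (n : ℝ) ^ (α - 1 / 2)))
      = volume.withDensity (fun s => ENNReal.ofReal
          (Real.exp (-(n : ℝ) * Gn β h n (m + (n : ℝ) ^ (α - 1) * s)) /
            ∫ t : ℝ, Real.exp (-(n : ℝ) * Gn β h n (m + (n : ℝ) ^ (α - 1) * t)))) := by
  have hn0 : (0 : ℝ) < n := by exact_mod_cast hn
  have hA : (n : ℝ) ^ α ≠ 0 := (rpow_pos_of_pos hn0 α).ne'
  set v : ℝ≥0 := β⁻¹.toNNReal / .mk (((n : ℝ) ^ (α - 1 / 2)) ^ 2) (sq_nonneg _) with hv_def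
  have hv : (v : ℝ) = β⁻¹ * n / ((n : ℝ) ^ α) ^ 2 := by
    rw [hv_def, NNReal.coe_div, coe_toNNReal _ (inv_pos.2 hβ).le, NNReal.coe_mk,
      rpow_sub_half_sq hn0]
    field_simp
  have hv0 : v ≠ 0 := by rw [← NNReal.coe_ne_zero, hv]; positivity
  let a : (Fin n → Bool) → ℝ := fun σ => (mag σ - n * m) / (n : ℝ) ^ α
  have := Measure.isProbabilityMeasure_map
    (μ := (gibbsMeasure β h n).prod (gaussianReal 0 β⁻¹.toNNReal))
    (measurable_add_div a ((n : ℝ) ^ (α - 1 / 2))).aemeasurable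
  refine eq_withDensity_ofReal_div_integral
    (c := (√(2 * π * v))⁻¹ * 2 ^ n / ∑ σ, gibbsWeight β h n σ) (by unfold Gn; fun_prop)
    (fun s => (exp_pos _).le)
    (div_nonneg (by positivity) (sum_gibbsWeight_pos β h n).le) ?_
  refine (map_prod_gaussianReal_add_div _ a _ hv0).trans ?_
  congr 1 with s
  rw [sum_gibbsMeasure_singleton_mul_gaussianPDF, sum_gibbsWeight_mul_gaussianPDFReal hβ.ne' h
    hn0.ne' hA hv, ← rpow_sub_one hn0.ne', mul_div_right_comm]

/-- The Hubbard-Stratonovich transformation (Lemma 5.1 of the paper). -/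
theorem hubbard_stratonovich
    (β : ℝ) (hβ : 0 < β) (m α : ℝ) (hα1 : 0 < α) (hα2 : α < 1)
    (h : ℕ → ℝ) (n : ℕ) (hn : 1 ≤ n) :
    (((gibbsMeasure β h n).prod (gaussianReal 0 (Real.toNNReal β⁻¹))).map
        (fun p : (Fin n → Bool) × ℝ =>
          (mag p.1 - n * m) / (n : ℝ) ^ α + p.2 / (n : ℝ) ^ (α - 1 / 2)))
      = volume.withDensity (fun s => ENNReal.ofReal
          (Real.exp (-(n : ℝ) * Gn β h n (m + (n : ℝ) ^ (α - 1) * s)) /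
            ∫ t : ℝ, Real.exp (-(n : ℝ) * Gn β h n (m + (n : ℝ) ^ (α - 1) * t)))) :=
  hubbard_stratonovich_general β hβ m α h n hn
end
end

section
/- Let m ∈ ℝ, k ≥ 1, and fix α with 1 − 1/(2(2k−1)) < α < 1. Suppose ν has a finite second moment. Then for μ-almost every realization h and every i with 1 ≤ i ≤ 2k, n^{(2k−i)(1−α)} | G_n^{h,(i)}(m) − G^{(i)}(m) | → 0 as n → ∞. -/
open MeasureTheory ProbabilityTheory Real Filter Topology
open scoped ENNReal NNReal

noncomputable section

/-!
For `i ≥ 1` the `i`-th derivatives of `G` and `G_n^h` at `m` differ by the deviation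
`∫ g dν - (1/n) ∑ g(h_j)` of an empirical mean, where `g(a)` is the `i`-th derivative of
`y ↦ log cosh (β y)` at `m + a`. This `g` is bounded, since every derivative of `log cosh` is a
polynomial in `tanh`. By Hoeffding's inequality the probability that `n^γ` times the deviation
exceeds `ε` is at most `2 exp(-c ε² n^(1-2γ))`, which is summable when `γ < 1/2`, so
Borel–Cantelli gives almost sure convergence. The condition on `α` makes the exponents
`(2k - i)(1 - α)` smaller than `1/2`.
-/

open scoped ContDiff Polynomial

namespace Real

theorem hasDerivAt_tanh (y : ℝ) : HasDerivAt tanh (1 - tanh y ^ 2) y := by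
  have h := (hasDerivAt_sinh y).div (hasDerivAt_cosh y) (cosh_pos y).ne'
  rw [show tanh = sinh / cosh from funext tanh_eq_sinh_div_cosh]
  refine h.congr_deriv ?_
  simp only [Pi.div_apply]
  field_simp

theorem hasDerivAt_log_cosh (y : ℝ) : HasDerivAt (fun y => log (cosh y)) (tanh y) y := by
  simpa [tanh_eq_sinh_div_cosh] using (hasDerivAt_cosh y).log (cosh_pos y).ne'

theorem contDiff_log_cosh : ContDiff ℝ ∞ fun y => log (cosh y) :=
  contDiff_cosh.log fun y => (cosh_pos y).ne'

theorem contDiff_log_cosh_const_mul (β : ℝ) : ContDiff ℝ ∞ fun y => log (cosh (β * y)) :=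
  contDiff_log_cosh.comp (contDiff_const.mul contDiff_id)

theorem exists_polynomial_iteratedDeriv_log_cosh (i : ℕ) :
    ∃ P : ℝ[X], iteratedDeriv (i + 1) (fun y => log (cosh y)) = fun y => P.eval (tanh y) := by
  induction i with
  | zero => exact ⟨.X, by simpa using funext fun y => (hasDerivAt_log_cosh y).deriv⟩
  | succ i ih =>
    obtain ⟨P, hP⟩ := ih
    refine ⟨P.derivative * (1 - .X ^ 2), funext fun y => ?_⟩
    rw [iteratedDeriv_succ, hP]
    simpa [Function.comp_def] using ((P.hasDerivAt (tanh y)).comp y (hasDerivAt_tanh y)).deriv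

theorem exists_bound_iteratedDeriv_log_cosh_const_mul (β : ℝ) (i : ℕ) :
    ∃ C, ∀ y, |iteratedDeriv (i + 1) (fun y => log (cosh (β * y))) y| ≤ C := by
  obtain ⟨P, hP⟩ := exists_polynomial_iteratedDeriv_log_cosh i
  obtain ⟨C, hC⟩ := isCompact_Icc.exists_bound_of_continuousOn
    (P.continuous.continuousOn (s := Set.Icc (-1 : ℝ) 1))
  refine ⟨|β| ^ (i + 1) * C, fun y => ?_⟩
  rw [iteratedDeriv_comp_const_mul (contDiff_log_cosh.of_le (by exact_mod_cast le_top)), hP,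
    abs_mul, abs_pow]
  gcongr
  exact hC _ ⟨(neg_one_lt_tanh _).le, (tanh_lt_one _).le⟩

theorem log_cosh_le_sq_div_two (y : ℝ) : log (cosh y) ≤ y ^ 2 / 2 := by
  rw [← log_exp (y ^ 2 / 2)]
  exact log_le_log (cosh_pos y) (cosh_le_exp_half_sq y)

end Real

section IteratedDeriv

variable {𝕜 : Type*} [NontriviallyNormedField 𝕜] {E : Type*} [NormedAddCommGroup E]
  [NormedSpace 𝕜 E]

theorem iteratedDeriv_eq_of_hasDerivAt {F : ℕ → 𝕜 → E}
    (hF : ∀ i x, HasDerivAt (F i) (F (i + 1) x) x) (i : ℕ) : iteratedDeriv i (F 0) = F i := by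
  induction i with
  | zero => exact iteratedDeriv_zero
  | succ i ih => exact funext fun x => by rw [iteratedDeriv_succ, ih, (hF i x).deriv]

theorem ContDiff.hasDerivAt_iteratedDeriv {f : 𝕜 → E} (hf : ContDiff 𝕜 ∞ f) (i : ℕ) (x : 𝕜) :
    HasDerivAt (iteratedDeriv i f) (iteratedDeriv (i + 1) f x) x := by
  rw [iteratedDeriv_succ]
  exact ((hf.differentiable_iteratedDeriv i (by exact_mod_cast WithTop.coe_lt_top _)) x).hasDerivAt

end IteratedDeriv

section IntegralTranslate

variable {E : Type*} [NormedAddCommGroup E] [NormedSpace ℝ E] {ν : Measure ℝ} [IsFiniteMeasure ν]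

theorem hasDerivAt_integral_comp_add {f f' : ℝ → E} (hf : ∀ y, HasDerivAt f (f' y) y)
    (hf' : Continuous f') {C : ℝ} (hC : ∀ y, ‖f' y‖ ≤ C) {x : ℝ}
    (hint : Integrable (fun a => f (x + a)) ν) :
    HasDerivAt (fun x => ∫ a, f (x + a) ∂ν) (∫ a, f' (x + a) ∂ν) x := by
  have hfc : Continuous f := continuous_iff_continuousAt.2 fun y => (hf y).continuousAt
  refine (hasDerivAt_integral_of_dominated_loc_of_deriv_le (bound := fun _ => C)
    (F' := fun x a => f' (x + a)) univ_mem ?_ hint ?_ ?_ (integrable_const C) ?_).2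
  · exact .of_forall fun x => (hfc.comp (continuous_const_add x)).aestronglyMeasurable
  · exact (hf'.comp (continuous_const_add x)).aestronglyMeasurable
  · exact .of_forall fun a _ _ => hC _
  · exact .of_forall fun a z _ => (hf (z + a)).comp_add_const z a

theorem hasDerivAt_integral_iteratedDeriv_comp_add {f : ℝ → E} (hf : ContDiff ℝ ∞ f)
    (hbdd : ∀ i, ∃ C, ∀ y, ‖iteratedDeriv (i + 1) f y‖ ≤ C)
    (hint : ∀ x, Integrable (fun a => f (x + a)) ν) (i : ℕ) (x : ℝ) :
    HasDerivAt (fun x => ∫ a, iteratedDeriv i f (x + a) ∂ν)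
      (∫ a, iteratedDeriv (i + 1) f (x + a) ∂ν) x := by
  obtain ⟨C, hC⟩ := hbdd i
  refine hasDerivAt_integral_comp_add (hf.hasDerivAt_iteratedDeriv i)
    (hf.continuous_iteratedDeriv _ (by exact_mod_cast le_top)) hC ?_
  cases i with
  | zero => simpa using hint x
  | succ i =>
    obtain ⟨C', hC'⟩ := hbdd i
    refine (integrable_const C').mono'
      ((hf.continuous_iteratedDeriv _ (by exact_mod_cast le_top)).comp
        (continuous_const_add x)).aestronglyMeasurable (.of_forall fun a => hC' _)

end IntegralTranslate

section CurieWeiss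

variable {β : ℝ} {ν : Measure ℝ}

theorem integrable_log_cosh_mul_add [IsFiniteMeasure ν]
    (hmom : Integrable (fun x : ℝ => x ^ 2) ν) (x : ℝ) :
    Integrable (fun a => log (cosh (β * (x + a)))) ν := by
  refine ((integrable_const (x ^ 2)).add hmom |>.const_mul (β ^ 2)).mono'
    (contDiff_log_cosh.continuous.comp (by fun_prop)).aestronglyMeasurable
    (.of_forall fun a => ?_)
  rw [norm_of_nonneg (log_nonneg (one_le_cosh _)), Pi.add_apply]
  nlinarith [log_cosh_le_sq_div_two (β * (x + a)), sq_nonneg (β * (x - a))]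

theorem iteratedDeriv_G [IsFiniteMeasure ν] (hmom : Integrable (fun x : ℝ => x ^ 2) ν)
    (i : ℕ) (x : ℝ) :
    iteratedDeriv i (G β ν) x = iteratedDeriv i (fun x => β / 2 * x ^ 2) x -
      ∫ a, iteratedDeriv i (fun y => log (cosh (β * y))) (x + a) ∂ν := by
  refine congrFun (iteratedDeriv_eq_of_hasDerivAt (F := fun i x =>
    iteratedDeriv i (fun x => β / 2 * x ^ 2) x -
      ∫ a, iteratedDeriv i (fun y => log (cosh (β * y))) (x + a) ∂ν) (fun i x => ?_) i) x
  refine (ContDiff.hasDerivAt_iteratedDeriv (by fun_prop) i x).sub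
    (hasDerivAt_integral_iteratedDeriv_comp_add (contDiff_log_cosh_const_mul β) (fun i => ?_) ?_
      i x)
  · simpa only [Real.norm_eq_abs] using exists_bound_iteratedDeriv_log_cosh_const_mul β i
  · simpa using integrable_log_cosh_mul_add hmom

theorem iteratedDeriv_Gn (h : ℕ → ℝ) (n i : ℕ) (x : ℝ) :
    iteratedDeriv i (Gn β h n) x = iteratedDeriv i (fun x => β / 2 * x ^ 2) x -
      1 / n * ∑ j : Fin n, iteratedDeriv i (fun y => log (cosh (β * y))) (x + h j) := by
  refine congrFun (iteratedDeriv_eq_of_hasDerivAt (F := fun i x =>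
    iteratedDeriv i (fun x => β / 2 * x ^ 2) x -
      1 / n * ∑ j : Fin n, iteratedDeriv i (fun y => log (cosh (β * y))) (x + h j))
    (fun i x => ?_) i) x
  refine (ContDiff.hasDerivAt_iteratedDeriv (by fun_prop) i x).sub (.const_mul _ ?_)
  exact .fun_sum fun j _ =>
    ((contDiff_log_cosh_const_mul β).hasDerivAt_iteratedDeriv i (x + h j)).comp_add_const x (h j)

end CurieWeiss

section Hoeffding

variable {ν : Measure ℝ} [IsProbabilityMeasure ν]

theorem measureReal_pi_le_abs_sum_le {X : ℝ → ℝ} {c : ℝ≥0} (hX : HasSubgaussianMGF X c ν)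
    (n : ℕ) {ε : ℝ} (hε : 0 ≤ ε) :
    (Measure.pi fun _ : Fin n => ν).real {y | ε ≤ |∑ j, X (y j)|} ≤
      2 * exp (-ε ^ 2 / (2 * n * c)) := by
  have hcoord : ∀ {Y : ℝ → ℝ}, HasSubgaussianMGF Y c ν → ∀ j : Fin n,
      HasSubgaussianMGF (fun y : Fin n → ℝ => Y (y j)) c (Measure.pi fun _ => ν) :=
    fun hY j => .of_map (measurable_pi_apply j).aemeasurable
      (by rwa [(measurePreserving_eval (fun _ => ν) j).map_eq])
  have htail : ∀ {Y : ℝ → ℝ}, HasSubgaussianMGF Y c ν →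
      (Measure.pi fun _ : Fin n => ν).real {y | ε ≤ ∑ j, Y (y j)} ≤
        exp (-ε ^ 2 / (2 * n * c)) := fun {Y} hY => by
    simpa [mul_assoc] using HasSubgaussianMGF.measure_sum_ge_le_of_iIndepFun
      (iIndepFun_pi (X := fun _ => Y) fun _ => hY.aemeasurable) (c := fun _ => c)
      (s := Finset.univ) (fun j _ => hcoord hY j) hε
  calc _ ≤ (Measure.pi fun _ : Fin n => ν).real
        ({y | ε ≤ ∑ j, X (y j)} ∪ {y | ε ≤ ∑ j, (-X) (y j)}) := by
        refine measureReal_mono (fun y hy => ?_)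
        rcases le_abs'.1 (show ε ≤ |_| from hy) with hy | hy
        · exact .inr (by simpa using le_neg_of_le_neg hy)
        · exact .inl hy
    _ ≤ _ := (measureReal_union_le _ _).trans (by linarith [htail hX, htail hX.neg])

end Hoeffding

theorem summable_exp_neg_mul_rpow {ρ δ : ℝ} (hρ : 0 < ρ) (hδ : 0 < δ) :
    Summable fun n : ℕ => exp (-ρ * (n : ℝ) ^ δ) := by
  have hlim : Tendsto (fun n : ℕ => (n : ℝ) ^ (2 : ℝ) * exp (-ρ * (n : ℝ) ^ δ)) atTop (𝓝 0) := by
    refine ((tendsto_rpow_mul_exp_neg_mul_atTop_nhds_zero (2 / δ) ρ hρ).comp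
      ((tendsto_rpow_atTop hδ).comp tendsto_natCast_atTop_atTop)).congr fun n => ?_
    simp only [Function.comp_apply, ← rpow_mul n.cast_nonneg, mul_div_cancel₀ _ hδ.ne']
  refine .of_norm_bounded_eventually_nat (summable_nat_rpow.2 (by norm_num : (-2 : ℝ) < -1)) ?_
  filter_upwards [hlim.eventually (gt_mem_nhds one_pos), eventually_gt_atTop 0] with n hn hn0
  have hpos : (0 : ℝ) < (n : ℝ) ^ (2 : ℝ) := by positivity
  rw [norm_of_nonneg (exp_pos _).le, rpow_neg n.cast_nonneg, ← one_div, le_div_iff₀ hpos]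
  linarith

theorem ae_tendsto_zero_of_summable_measure_le {Ω : Type*} [MeasurableSpace Ω] {μ : Measure Ω}
    {f : ℕ → Ω → ℝ} (hf : ∀ n x, 0 ≤ f n x)
    (hsum : ∀ ε > 0, ∃ w : ℕ → ℝ, Summable w ∧ ∀ n, μ {x | ε ≤ f n x} ≤ .ofReal (w n)) :
    ∀ᵐ x ∂μ, Tendsto (fun n => f n x) atTop (𝓝 0) := by
  have hev : ∀ m : ℕ, ∀ᵐ x ∂μ, ∀ᶠ n in atTop, f n x < 1 / (m + 1) := fun m => by
    obtain ⟨w, hw, hle⟩ := hsum (1 / (m + 1)) (by positivity)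
    filter_upwards [ae_eventually_notMem
      (ne_top_of_le_ne_top hw.tsum_ofReal_ne_top (ENNReal.tsum_le_tsum hle))] with x hx
    simpa using hx
  filter_upwards [ae_all_iff.2 hev] with x hx
  refine Metric.tendsto_atTop.2 fun ε hε => ?_
  obtain ⟨m, hm⟩ := exists_nat_one_div_lt hε
  obtain ⟨N, hN⟩ := eventually_atTop.1 (hx m)
  exact ⟨N, fun n hn => by
    rw [Real.dist_eq, sub_zero, abs_of_nonneg (hf n x)]
    exact (hN n hn).trans hm⟩

section EmpiricalAverage

variable {ν : Measure ℝ} [IsProbabilityMeasure ν] {μ : Measure (ℕ → ℝ)}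

theorem measure_le_rpow_mul_abs_average_le (hμ : IsProductMeasure ν μ) {X : ℝ → ℝ} {c : ℝ≥0}
    (hX : HasSubgaussianMGF X c ν) (γ : ℝ) {ε : ℝ} (hε : 0 ≤ ε) {n : ℕ} (hn : 0 < n) :
    μ {h | ε ≤ (n : ℝ) ^ γ * |1 / n * ∑ j : Fin n, X (h j)|} ≤
      .ofReal (2 * exp (-(ε ^ 2 / (2 * c)) * (n : ℝ) ^ (1 - 2 * γ))) := by
  have hn' : (0 : ℝ) < n := Nat.cast_pos.2 hn
  have hscale : ∀ S : ℝ, (n : ℝ) ^ γ * |1 / n * S| = |S| / (n : ℝ) ^ (1 - γ) := fun S => by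
    rw [abs_mul, abs_of_pos (by positivity), rpow_sub hn', rpow_one]
    field_simp
  have hexp : -(ε * (n : ℝ) ^ (1 - γ)) ^ 2 / (2 * n * c) =
      -(ε ^ 2 / (2 * c)) * (n : ℝ) ^ (1 - 2 * γ) := by
    rw [mul_pow, ← rpow_natCast ((n : ℝ) ^ (1 - γ)), ← rpow_mul hn'.le,
      show (1 - γ) * ((2 : ℕ) : ℝ) = 1 + (1 - 2 * γ) by push_cast; ring, rpow_add hn', rpow_one]
    field_simp
  have hset : {h : ℕ → ℝ | ε ≤ (n : ℝ) ^ γ * |1 / n * ∑ j : Fin n, X (h j)|} =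
      (fun h (j : Fin n) => h j) ⁻¹' {y | ε * (n : ℝ) ^ (1 - γ) ≤ |∑ j, X (y j)|} := by
    ext h
    simp only [Set.mem_ofPred_eq, Set.mem_preimage, hscale, le_div_iff₀ (rpow_pos_of_pos hn' _)]
  rw [hset, ← hexp]
  refine (Measure.le_map_apply
    (measurable_pi_lambda _ fun j => measurable_pi_apply _).aemeasurable _).trans ?_
  rw [hμ n, ← ofReal_measureReal]
  exact ENNReal.ofReal_le_ofReal
    (measureReal_pi_le_abs_sum_le hX n (mul_nonneg hε (rpow_nonneg hn'.le _)))

theorem ae_tendsto_rpow_mul_abs_average_sub_integral (hμ : IsProductMeasure ν μ) {g : ℝ → ℝ}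
    (hg : Measurable g) {C : ℝ} (hC : ∀ y, |g y| ≤ C) {γ : ℝ} (hγ : γ < 1 / 2) :
    ∀ᵐ h ∂μ, Tendsto (fun n : ℕ => (n : ℝ) ^ γ * |1 / n * ∑ j : Fin n, g (h j) - ∫ x, g x ∂ν|)
      atTop (𝓝 0) := by
  -- `±(C + 1)` rather than `±C`, so that the variance proxy `c` is positive
  have hX := hasSubgaussianMGF_of_mem_Icc (μ := ν) (a := -(C + 1)) (b := C + 1) hg.aemeasurable
    (ae_of_all _ fun y => by constructor <;> linarith [abs_le.1 (hC y)])
  set c : ℝ≥0 := (‖C + 1 - -(C + 1)‖₊ / 2) ^ 2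
  have hc : 0 < c := by
    have : 0 < C + 1 := by linarith [abs_nonneg (g 0), hC 0]
    have : ‖C + 1 - -(C + 1)‖₊ ≠ 0 := by rw [nnnorm_ne_zero_iff]; linarith
    positivity
  have hdev : ∀ (h : ℕ → ℝ) (n : ℕ), 0 < n → 1 / n * ∑ j : Fin n, g (h j) - ∫ x, g x ∂ν =
      1 / n * ∑ j : Fin n, (g (h j) - ∫ x, g x ∂ν) := fun h n hn => by
    rw [Finset.sum_sub_distrib, Finset.sum_const, Finset.card_univ, Fintype.card_fin, nsmul_eq_mul]
    field_simp
  have hshift := ae_tendsto_zero_of_summable_measure_le (μ := μ)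
    (f := fun n h => ((n + 1 : ℕ) : ℝ) ^ γ *
      |1 / (n + 1 : ℕ) * ∑ j : Fin (n + 1), g (h j) - ∫ x, g x ∂ν|)
    (fun n h => by positivity) fun ε hε =>
      ⟨fun n => 2 * exp (-(ε ^ 2 / (2 * c)) * ((n + 1 : ℕ) : ℝ) ^ (1 - 2 * γ)),
        (summable_nat_add_iff 1).2
          ((summable_exp_neg_mul_rpow (by positivity) (by linarith)).mul_left 2),
        fun n => by
          simpa only [hdev _ _ n.succ_pos] using
            measure_le_rpow_mul_abs_average_le hμ hX γ hε.le n.succ_pos⟩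
  filter_upwards [hshift] with h hh using (tendsto_add_atTop_iff_nat 1).1 hh

end EmpiricalAverage

theorem mul_one_sub_lt_half {k i : ℕ} {α : ℝ} (hα : 1 - 1 / (2 * (2 * (k : ℝ) - 1)) < α)
    (hi1 : 1 ≤ i) (hik : i ≤ 2 * k) : (2 * (k : ℝ) - i) * (1 - α) < 1 / 2 := by
  have hi1' : (1 : ℝ) ≤ i := by exact_mod_cast hi1
  have hik' : (i : ℝ) ≤ 2 * k := by exact_mod_cast hik
  rcases le_or_gt 1 α with hα1 | hα1
  · nlinarith
  · have hk : (1 : ℝ) ≤ k := by exact_mod_cast (by omega : 1 ≤ k)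
    have hK : 0 < 2 * (k : ℝ) - 1 := by linarith
    calc (2 * (k : ℝ) - i) * (1 - α) ≤ (2 * k - 1) * (1 - α) := by gcongr
      _ < (2 * k - 1) * (1 / (2 * (2 * k - 1))) := by gcongr; linarith
      _ = 1 / 2 := by field_simp

theorem derivatives_rate_convergence_general
    (β : ℝ) (ν : Measure ℝ) [IsProbabilityMeasure ν]
    (hmom : Integrable (fun x : ℝ => x ^ 2) ν)
    (μ : Measure (ℕ → ℝ)) (hμ : IsProductMeasure ν μ)
    (m : ℝ) (k : ℕ)
    (α : ℝ) (hα1 : 1 - 1 / (2 * (2 * (k : ℝ) - 1)) < α) :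
    ∀ᵐ h ∂μ, ∀ i : ℕ, 1 ≤ i → i ≤ 2 * k →
      Tendsto (fun n : ℕ => (n : ℝ) ^ ((2 * (k : ℝ) - (i : ℝ)) * (1 - α)) *
          |iteratedDeriv i (Gn β h n) m - iteratedDeriv i (G β ν) m|) atTop
        (𝓝 0) := by
  refine ae_all_iff.2 fun i => ?_
  by_cases hi : 1 ≤ i ∧ i ≤ 2 * k
  swap
  · exact ae_of_all _ fun _ hi1 hik => absurd ⟨hi1, hik⟩ hi
  obtain ⟨i, rfl⟩ := Nat.exists_eq_add_of_le' hi.1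
  obtain ⟨C, hC⟩ := exists_bound_iteratedDeriv_log_cosh_const_mul β i
  have hg : Continuous fun a => iteratedDeriv (i + 1) (fun y => log (cosh (β * y))) (m + a) :=
    ((contDiff_log_cosh_const_mul β).continuous_iteratedDeriv _ (by exact_mod_cast le_top)).comp
      (continuous_const_add m)
  filter_upwards [ae_tendsto_rpow_mul_abs_average_sub_integral hμ hg.measurable (fun a => hC _)
    (mul_one_sub_lt_half hα1 hi.1 hi.2)] with h hh _ _
  refine hh.congr fun n => ?_
  rw [iteratedDeriv_Gn, iteratedDeriv_G hmom, sub_sub_sub_cancel_left, abs_sub_comm]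

/-- Marcinkiewicz-Zygmund type convergence of derivatives at `m`
(display (5.4) of the paper). -/
theorem derivatives_rate_convergence
    (β : ℝ) (hβ : 0 < β) (ν : Measure ℝ) [IsProbabilityMeasure ν]
    (hmom : Integrable (fun x : ℝ => x ^ 2) ν)
    (μ : Measure (ℕ → ℝ)) [IsProbabilityMeasure μ] (hμ : IsProductMeasure ν μ)
    (m : ℝ) (k : ℕ) (hk : 1 ≤ k)
    (α : ℝ) (hα1 : 1 - 1 / (2 * (2 * (k : ℝ) - 1)) < α) (hα2 : α < 1) :
    ∀ᵐ h ∂μ, ∀ i : ℕ, 1 ≤ i → i ≤ 2 * k →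
      Tendsto (fun n : ℕ => (n : ℝ) ^ ((2 * (k : ℝ) - (i : ℝ)) * (1 - α)) *
          |iteratedDeriv i (Gn β h n) m - iteratedDeriv i (G β ν) m|) atTop
        (𝓝 0) :=
  derivatives_rate_convergence_general β ν hmom μ hμ m k α hα1
end
end
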